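/- arXiv:1906.08253 — 2 statements merged into one kernel-verified Lean document; each statement's English description precedes it below -/
import Mathlib

section
/- Let S and A be finite nonempty sets, let (π_1, p_1) and (π_2, p_2) be two policy/dynamics pairs sharing an initial state distribution ρ0, let r be a reward bounded in absolute value by r_max ≥ 0, and γ ∈ (0,1). Suppose (i) for every timestep t, the expectation over (s,a) drawn from the time-t state-action marginal of (π_1, p_1) of TV(p_1(·|s,a), p_2(·|s,a)) is at most ε_m, and (ii) max_s TV(π_1(·|s), π_2(·|s)) ≤ ε_π. Then the respective discounted returns satisfy |η_1 − η_2| ≤ 2·r_max·[ γ·(ε_π + ε_m)/(1−γ)² + ε_π/(1−γ) ]. -/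
open scoped BigOperators

/-- Total variation distance between two probability mass functions on a finite type. -/
noncomputable def tv {X : Type*} [Fintype X] (q1 q2 : PMF X) : ℝ :=
  (1 / 2) * ∑ x, |(q1 x).toReal - (q2 x).toReal|

/-- Total variation distance between two real-valued distributions on a finite type. -/
noncomputable def tvFun {X : Type*} [Fintype X] (d1 d2 : X → ℝ) : ℝ :=
  (1 / 2) * ∑ x, |d1 x - d2 x|

/-- Time-`t` state-action marginal of a (possibly time-varying) policy/dynamics pair,
started from initial state distribution `ρ0`:  `d⁰(s,a) = ρ0(s)·π₀(a|s)` and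
`d^{t+1}(s,a) = Σ_{s',a'} d^t(s',a')·p_t(s|s',a')·π_{t+1}(a|s)`. -/
noncomputable def marginal {S A : Type*} [Fintype S] [Fintype A]
    (ρ0 : PMF S) (πseq : ℕ → S → PMF A) (pseq : ℕ → S × A → PMF S) :
    ℕ → S × A → ℝ
  | 0 => fun sa => (ρ0 sa.1).toReal * ((πseq 0 sa.1) sa.2).toReal
  | t + 1 => fun sa =>
      ∑ s' : S, ∑ a' : A,
        marginal ρ0 πseq pseq t (s', a') * ((pseq t (s', a')) sa.1).toReal *
          ((πseq (t + 1) sa.1) sa.2).toReal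

/-- Discounted return `η = Σ_t γ^t Σ_{s,a} d^t(s,a)·r(s,a)`. -/
noncomputable def ret {S A : Type*} [Fintype S] [Fintype A]
    (γ : ℝ) (r : S × A → ℝ) (d : ℕ → S × A → ℝ) : ℝ :=
  ∑' t : ℕ, γ ^ t * ∑ sa : S × A, d t sa * r sa

/-!
The `ℓ¹` distance `δₜ` between the two state-action marginals satisfies `δ₀ ≤ 2επ` and
`δₜ₊₁ ≤ δₜ + 2εm + 2επ`: a step is a transition followed by an action, and changing the
dynamics costs twice the expected model total variation under the first marginal, changing the
policy costs at most `2επ`, while a common kernel does not increase `ℓ¹` distance.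
Hence `δₜ ≤ 2(εm + επ)t + 2επ`; the per-step rewards differ by at most `rmax·δₜ`, and summing
against `γᵗ` with `∑ₜ t·γᵗ = γ / (1 - γ)²` gives the bound.
-/

open Finset

lemma PMF.sum_toReal_eq_one {X : Type*} [Fintype X] (q : PMF X) : ∑ x, (q x).toReal = 1 := by
  rw [← ENNReal.toReal_sum fun x _ => q.apply_ne_top x, ← tsum_fintype (L := .unconditional _),
    q.tsum_coe, ENNReal.toReal_one]

lemma sum_mul_le_sum_mul_of_le {X : Type*} [Fintype X] {w f : X → ℝ} {c : ℝ}
    (hw : ∀ x, 0 ≤ w x) (hf : ∀ x, f x ≤ c) : ∑ x, w x * f x ≤ (∑ x, w x) * c := by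
  rw [sum_mul]
  exact sum_le_sum fun x _ => mul_le_mul_of_nonneg_left (hf x) (hw x)

lemma abs_sum_mul_le_sum_abs_mul {X : Type*} [Fintype X] (w : X → ℝ) {f : X → ℝ} {c : ℝ}
    (hf : ∀ x, |f x| ≤ c) : |∑ x, w x * f x| ≤ (∑ x, |w x|) * c := by
  refine (abs_sum_le_sum_abs _ _).trans ?_
  simp only [abs_mul]
  exact sum_mul_le_sum_mul_of_le (fun x => abs_nonneg (w x)) hf

lemma sum_abs_mul_sub_mul_le {Y : Type*} [Fintype Y] (c c' : ℝ) (q q' : PMF Y) :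
    ∑ y, |c * (q y).toReal - c' * (q' y).toReal| ≤ |c - c'| + 2 * |c| * tv q q' := by
  calc ∑ y, |c * (q y).toReal - c' * (q' y).toReal|
      = ∑ y, |(c - c') * (q' y).toReal + c * ((q y).toReal - (q' y).toReal)| := by
        congr! 2 with y; ring
    _ ≤ ∑ y, (|c - c'| * (q' y).toReal + |c| * |(q y).toReal - (q' y).toReal|) := by
        gcongr with y
        refine (abs_add_le _ _).trans_eq ?_
        rw [abs_mul, abs_mul, abs_of_nonneg ENNReal.toReal_nonneg]
    _ = |c - c'| + 2 * |c| * tv q q' := by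
        rw [sum_add_distrib, ← mul_sum, ← mul_sum, PMF.sum_toReal_eq_one, tv]; ring

noncomputable def transit {X S : Type*} [Fintype X] (p : X → PMF S) (d : X → ℝ) (s : S) : ℝ :=
  ∑ x, d x * (p x s).toReal

noncomputable def actWith {S A : Type*} (π : S → PMF A) (μ : S → ℝ) (sa : S × A) : ℝ :=
  μ sa.1 * (π sa.1 sa.2).toReal

section Kernels

variable {X S A : Type*} [Fintype X]

lemma transit_nonneg (p : X → PMF S) {d : X → ℝ} (hd : ∀ x, 0 ≤ d x) (s : S) :
    0 ≤ transit p d s :=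
  sum_nonneg fun x _ => mul_nonneg (hd x) ENNReal.toReal_nonneg

lemma sum_transit [Fintype S] (p : X → PMF S) (d : X → ℝ) : ∑ s, transit p d s = ∑ x, d x := by
  simp only [transit]
  rw [sum_comm]
  simp only [← mul_sum, PMF.sum_toReal_eq_one, mul_one]

lemma actWith_nonneg (π : S → PMF A) {μ : S → ℝ} (hμ : ∀ s, 0 ≤ μ s) (sa : S × A) :
    0 ≤ actWith π μ sa :=
  mul_nonneg (hμ sa.1) ENNReal.toReal_nonneg

lemma sum_actWith [Fintype S] [Fintype A] (π : S → PMF A) (μ : S → ℝ) :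
    ∑ sa, actWith π μ sa = ∑ s, μ s := by
  simp only [actWith, Fintype.sum_prod_type, ← mul_sum, PMF.sum_toReal_eq_one, mul_one]

lemma sum_abs_transit_sub_le [Fintype S] (p p' : X → PMF S) (d d' : X → ℝ) :
    ∑ s, |transit p d s - transit p' d' s| ≤
      ∑ x, |d x - d' x| + 2 * ∑ x, |d x| * tv (p x) (p' x) := by
  calc ∑ s, |transit p d s - transit p' d' s|
      ≤ ∑ s, ∑ x, |d x * (p x s).toReal - d' x * (p' x s).toReal| := by
        gcongr with s
        rw [transit, transit, ← sum_sub_distrib]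
        exact abs_sum_le_sum_abs _ _
    _ = ∑ x, ∑ s, |d x * (p x s).toReal - d' x * (p' x s).toReal| := sum_comm
    _ ≤ ∑ x, (|d x - d' x| + 2 * |d x| * tv (p x) (p' x)) :=
        sum_le_sum fun x _ => sum_abs_mul_sub_mul_le _ _ _ _
    _ = ∑ x, |d x - d' x| + 2 * ∑ x, |d x| * tv (p x) (p' x) := by
        rw [sum_add_distrib, mul_sum]; simp only [mul_assoc]

lemma sum_abs_actWith_sub_le [Fintype S] [Fintype A] (π π' : S → PMF A) (μ μ' : S → ℝ) :
    ∑ sa, |actWith π μ sa - actWith π' μ' sa| ≤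
      ∑ s, |μ s - μ' s| + 2 * ∑ s, |μ s| * tv (π s) (π' s) := by
  calc ∑ sa, |actWith π μ sa - actWith π' μ' sa|
      ≤ ∑ s, (|μ s - μ' s| + 2 * |μ s| * tv (π s) (π' s)) := by
        simp only [Fintype.sum_prod_type, actWith]
        exact sum_le_sum fun s _ => sum_abs_mul_sub_mul_le _ _ _ _
    _ = ∑ s, |μ s - μ' s| + 2 * ∑ s, |μ s| * tv (π s) (π' s) := by
        rw [sum_add_distrib, mul_sum]; simp only [mul_assoc]

end Kernels

section Marginal

variable {S A : Type*} [Fintype S] [Fintype A] (ρ0 : PMF S)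

lemma marginal_zero (πseq : ℕ → S → PMF A) (pseq : ℕ → S × A → PMF S) :
    marginal ρ0 πseq pseq 0 = actWith (πseq 0) fun s => (ρ0 s).toReal :=
  rfl

lemma marginal_succ (πseq : ℕ → S → PMF A) (pseq : ℕ → S × A → PMF S) (t : ℕ) :
    marginal ρ0 πseq pseq (t + 1) =
      actWith (πseq (t + 1)) (transit (pseq t) (marginal ρ0 πseq pseq t)) := by
  ext sa
  simp only [marginal, actWith, transit, Fintype.sum_prod_type, sum_mul]

lemma marginal_nonneg (πseq : ℕ → S → PMF A) (pseq : ℕ → S × A → PMF S) :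
    ∀ t sa, 0 ≤ marginal ρ0 πseq pseq t sa
  | 0 => actWith_nonneg _ fun _ => ENNReal.toReal_nonneg
  | t + 1 => by
    rw [marginal_succ]
    exact actWith_nonneg _ (transit_nonneg _ (marginal_nonneg πseq pseq t))

lemma sum_marginal (πseq : ℕ → S → PMF A) (pseq : ℕ → S × A → PMF S) :
    ∀ t, ∑ sa, marginal ρ0 πseq pseq t sa = 1
  | 0 => by rw [marginal_zero, sum_actWith, PMF.sum_toReal_eq_one]
  | t + 1 => by rw [marginal_succ, sum_actWith, sum_transit, sum_marginal πseq pseq t]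

lemma sum_abs_marginal (πseq : ℕ → S → PMF A) (pseq : ℕ → S × A → PMF S) (t : ℕ) :
    ∑ sa, |marginal ρ0 πseq pseq t sa| = 1 := by
  simp only [abs_of_nonneg (marginal_nonneg ρ0 πseq pseq t _), sum_marginal]

variable (π1 π2 : ℕ → S → PMF A) (p1 p2 : ℕ → S × A → PMF S) {εm επ : ℝ}

lemma sum_abs_marginal_zero_sub_le (hεπ : ∀ s, tv (π1 0 s) (π2 0 s) ≤ επ) :
    ∑ sa, |marginal ρ0 π1 p1 0 sa - marginal ρ0 π2 p2 0 sa| ≤ 2 * επ := by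
  have hpolicy : ∑ s, |(ρ0 s).toReal| * tv (π1 0 s) (π2 0 s) ≤ επ := by
    simpa [PMF.sum_toReal_eq_one] using
      sum_mul_le_sum_mul_of_le (fun s => abs_nonneg (ρ0 s).toReal) hεπ
  have hstep := sum_abs_actWith_sub_le (π1 0) (π2 0) (fun s => (ρ0 s).toReal) (fun s => (ρ0 s).toReal)
  simp only [sub_self, abs_zero, sum_const_zero, zero_add] at hstep
  rw [marginal_zero, marginal_zero]
  linarith

lemma sum_abs_marginal_succ_sub_le (t : ℕ) (hεπ : ∀ s, tv (π1 (t + 1) s) (π2 (t + 1) s) ≤ επ) :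
    ∑ sa, |marginal ρ0 π1 p1 (t + 1) sa - marginal ρ0 π2 p2 (t + 1) sa| ≤
      ∑ sa, |marginal ρ0 π1 p1 t sa - marginal ρ0 π2 p2 t sa| +
        2 * ∑ sa, marginal ρ0 π1 p1 t sa * tv (p1 t sa) (p2 t sa) + 2 * επ := by
  set d1 := marginal ρ0 π1 p1 t
  set d2 := marginal ρ0 π2 p2 t
  have hd1 : ∀ sa, 0 ≤ d1 sa := marginal_nonneg ρ0 π1 p1 t
  have hd1_sum : ∑ sa, d1 sa = 1 := sum_marginal ρ0 π1 p1 t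
  have hpolicy : ∑ s, |transit (p1 t) d1 s| * tv (π1 (t + 1) s) (π2 (t + 1) s) ≤ επ := by
    simpa [abs_of_nonneg (transit_nonneg _ hd1 _), sum_transit, hd1_sum] using
      sum_mul_le_sum_mul_of_le (fun s => abs_nonneg (transit (p1 t) d1 s)) hεπ
  have hdynamics := sum_abs_transit_sub_le (p1 t) (p2 t) d1 d2
  simp only [abs_of_nonneg (hd1 _)] at hdynamics
  rw [marginal_succ, marginal_succ]
  linarith [sum_abs_actWith_sub_le (π1 (t + 1)) (π2 (t + 1)) (transit (p1 t) d1)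
    (transit (p2 t) d2)]

lemma sum_abs_marginal_sub_le
    (hεm : ∀ t, ∑ sa, marginal ρ0 π1 p1 t sa * tv (p1 t sa) (p2 t sa) ≤ εm)
    (hεπ : ∀ t s, tv (π1 t s) (π2 t s) ≤ επ) (t : ℕ) :
    ∑ sa, |marginal ρ0 π1 p1 t sa - marginal ρ0 π2 p2 t sa| ≤ 2 * (εm + επ) * t + 2 * επ := by
  induction t with
  | zero => simpa using sum_abs_marginal_zero_sub_le ρ0 π1 π2 p1 p2 (hεπ 0)
  | succ t ih =>
    push_cast
    linarith [sum_abs_marginal_succ_sub_le ρ0 π1 π2 p1 p2 t (hεπ (t + 1)), hεm t]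

end Marginal

section Return

variable {S A : Type*} [Fintype S] [Fintype A] {γ : ℝ}

lemma summable_pow_mul_of_abs_le (hγ0 : 0 ≤ γ) (hγ1 : γ < 1) {f : ℕ → ℝ} {C : ℝ}
    (hf : ∀ t, |f t| ≤ C) : Summable fun t => γ ^ t * f t := by
  refine (summable_geometric_of_lt_one hγ0 hγ1).mul_right C |>.of_norm_bounded fun t => ?_
  rw [norm_mul, norm_pow, Real.norm_eq_abs, Real.norm_eq_abs, abs_of_nonneg hγ0]
  exact mul_le_mul_of_nonneg_left (hf t) (pow_nonneg hγ0 t)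

lemma abs_ret_sub_le (hγ0 : 0 ≤ γ) (hγ1 : γ < 1) {r : S × A → ℝ} {rmax : ℝ} (hrmax : 0 ≤ rmax)
    (hr : ∀ sa, |r sa| ≤ rmax) {d1 d2 : ℕ → S × A → ℝ}
    (hd1 : ∀ t, ∑ sa, |d1 t sa| = 1) (hd2 : ∀ t, ∑ sa, |d2 t sa| = 1) {a b : ℝ}
    (hδ : ∀ t : ℕ, ∑ sa, |d1 t sa - d2 t sa| ≤ a * t + b) :
    |ret γ r d1 - ret γ r d2| ≤ rmax * (a * (γ / (1 - γ) ^ 2) + b * (1 - γ)⁻¹) := by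
  have hsummable : ∀ d : ℕ → S × A → ℝ, (∀ t, ∑ sa, |d t sa| = 1) →
      Summable fun t => γ ^ t * ∑ sa, d t sa * r sa := fun d hd =>
    summable_pow_mul_of_abs_le hγ0 hγ1 fun t =>
      (abs_sum_mul_le_sum_abs_mul (d t) hr).trans_eq (by rw [hd t, one_mul])
  have hγ : ‖γ‖ < 1 := by rwa [Real.norm_eq_abs, abs_of_nonneg hγ0]
  have hbound : HasSum (fun t : ℕ => rmax * (a * (t * γ ^ t) + b * γ ^ t))
      (rmax * (a * (γ / (1 - γ) ^ 2) + b * (1 - γ)⁻¹)) :=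
    (((hasSum_coe_mul_geometric_of_norm_lt_one hγ).mul_left a).add
      ((hasSum_geometric_of_lt_one hγ0 hγ1).mul_left b)).mul_left rmax
  rw [ret, ret, ← (hsummable d1 hd1).tsum_sub (hsummable d2 hd2), ← Real.norm_eq_abs]
  refine tsum_of_norm_bounded hbound fun t => ?_
  rw [← mul_sub, ← sum_sub_distrib, norm_mul, norm_pow, Real.norm_eq_abs, Real.norm_eq_abs,
    abs_of_nonneg hγ0]
  simp only [← sub_mul]
  calc γ ^ t * |∑ sa, (d1 t sa - d2 t sa) * r sa|
      ≤ γ ^ t * ((a * t + b) * rmax) := by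
        gcongr
        exact (abs_sum_mul_le_sum_abs_mul _ hr).trans
          (mul_le_mul_of_nonneg_right (hδ t) hrmax)
    _ = rmax * (a * (t * γ ^ t) + b * γ ^ t) := by ring

end Return

theorem returns_bound_general
    {S A : Type*} [Fintype S] [Fintype A]
    (p1 p2 : S × A → PMF S) (π1 π2 : S → PMF A) (ρ0 : PMF S)
    (r : S × A → ℝ) (rmax : ℝ) (hrmax : 0 ≤ rmax) (hr : ∀ sa : S × A, |r sa| ≤ rmax)
    (γ : ℝ) (hγ0 : 0 < γ) (hγ1 : γ < 1) (εm επ : ℝ)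
    (hεm : ∀ t : ℕ, ∑ sa : S × A,
      marginal ρ0 (fun _ => π1) (fun _ => p1) t sa * tv (p1 sa) (p2 sa) ≤ εm)
    (hεπ : ∀ s : S, tv (π1 s) (π2 s) ≤ επ) :
    |ret γ r (marginal ρ0 (fun _ => π1) (fun _ => p1)) -
        ret γ r (marginal ρ0 (fun _ => π2) (fun _ => p2))| ≤
      2 * rmax * (γ * (επ + εm) / (1 - γ) ^ 2 + επ / (1 - γ)) := by
  have hδ := sum_abs_marginal_sub_le ρ0 (fun _ => π1) (fun _ => π2) (fun _ => p1) (fun _ => p2)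
    hεm fun _ => hεπ
  convert abs_ret_sub_le hγ0.le hγ1 hrmax hr (sum_abs_marginal ρ0 _ _) (sum_abs_marginal ρ0 _ _)
    hδ using 1
  ring

/-- Branched returns bound (Lemma B.3). -/
theorem returns_bound
    {S A : Type*} [Fintype S] [Fintype A] [Nonempty S] [Nonempty A]
    (p1 p2 : S × A → PMF S) (π1 π2 : S → PMF A) (ρ0 : PMF S)
    (r : S × A → ℝ) (rmax : ℝ) (hrmax : 0 ≤ rmax) (hr : ∀ sa : S × A, |r sa| ≤ rmax)
    (γ : ℝ) (hγ0 : 0 < γ) (hγ1 : γ < 1) (εm επ : ℝ)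
    (hεm : ∀ t : ℕ, ∑ sa : S × A,
      marginal ρ0 (fun _ => π1) (fun _ => p1) t sa * tv (p1 sa) (p2 sa) ≤ εm)
    (hεπ : ∀ s : S, tv (π1 s) (π2 s) ≤ επ) :
    |ret γ r (marginal ρ0 (fun _ => π1) (fun _ => p1)) -
        ret γ r (marginal ρ0 (fun _ => π2) (fun _ => p2))| ≤
      2 * rmax * (γ * (επ + εm) / (1 - γ) ^ 2 + επ / (1 - γ)) :=
  returns_bound_general p1 p2 π1 π2 ρ0 r rmax hrmax hr γ hγ0 hγ1 εm επ hεm hεπ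
end

section
/- Let S and A be finite nonempty sets and k ∈ ℕ. Consider two branched processes i ∈ {1,2} from a common initial state distribution ρ0: for timesteps t < k process i uses policy π_i^post and dynamics p_i^post, and for timesteps t ≥ k it uses policy π_i^pre and dynamics p_i^pre. Suppose the per-step divergences during the post-branch phase are bounded by ε_m^post (expected TV of dynamics over the time-t marginal of process 1) and ε_π^post (max over states of policy TV), and during the pre-branch phase by ε_m^pre and ε_π^pre respectively. Let r be a reward bounded by r_max ≥ 0 and γ ∈ (0,1). Then the discounted returns satisfy |η_1 − η_2| ≤ 2·r_max·[ γ^{k+1}·(ε_m^pre + ε_π^pre)/(1−γ)² + k·(ε_m^post + ε_π^post)/(1−γ) + γ^k·ε_π^pre/(1−γ) + ε_π^post/(1−γ) ]. -/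
open scoped BigOperators

/-!
Both marginals are built by alternately pushing the state-action weights through the dynamics
and attaching the policy. Writing `c₁q₁ - c₂q₂ = c₁(q₁ - q₂) + (c₁ - c₂)q₂`, each of these two
operations increases the total variation distance between the two processes by at most the
expected divergence of the kernels involved, so the distance at time `t` is bounded by the
accumulated per-step divergences. Since the expected reward is `2 rmax`-Lipschitz in total
variation, summing this linear-in-`t` bound against `γ^t` gives the result.
-/

open Finset

section Weights

variable {X Y : Type*} [Fintype X] [Fintype Y]

@[simp]
lemma PMF.sum_toReal (q : PMF X) : ∑ x, (q x).toReal = 1 := by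
  have h := q.tsum_coe
  rw [tsum_fintype] at h
  rw [← ENNReal.toReal_sum fun x _ => q.apply_ne_top x, h, ENNReal.toReal_one]

lemma PMF.toReal_mem_stdSimplex (q : PMF X) : (fun x => (q x).toReal) ∈ stdSimplex ℝ X :=
  ⟨fun _ => ENNReal.toReal_nonneg, q.sum_toReal⟩

lemma tv_nonneg (q1 q2 : PMF X) : 0 ≤ tv q1 q2 := by
  unfold tv
  positivity

lemma sum_mul_le_of_mem_stdSimplex {w f : X → ℝ} {c : ℝ} (hw : w ∈ stdSimplex ℝ X)
    (hf : ∀ x, f x ≤ c) : ∑ x, w x * f x ≤ c :=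
  calc ∑ x, w x * f x ≤ ∑ x, w x * c :=
        sum_le_sum fun x _ => mul_le_mul_of_nonneg_left (hf x) (hw.1 x)
    _ = c := by rw [← sum_mul, hw.2, one_mul]

lemma sum_abs_mul_sub_mul_le_s9 {c1 : ℝ} (hc1 : 0 ≤ c1) (c2 : ℝ) (q1 q2 : PMF Y) :
    ∑ y, |c1 * (q1 y).toReal - c2 * (q2 y).toReal| ≤ 2 * (c1 * tv q1 q2) + |c1 - c2| :=
  calc ∑ y, |c1 * (q1 y).toReal - c2 * (q2 y).toReal|
      ≤ ∑ y, (c1 * |(q1 y).toReal - (q2 y).toReal| + |c1 - c2| * (q2 y).toReal) := by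
        refine sum_le_sum fun y _ => ?_
        rw [show c1 * (q1 y).toReal - c2 * (q2 y).toReal =
          c1 * ((q1 y).toReal - (q2 y).toReal) + (c1 - c2) * (q2 y).toReal by ring]
        refine (abs_add_le _ _).trans_eq ?_
        rw [abs_mul, abs_mul, abs_of_nonneg hc1, abs_of_nonneg ENNReal.toReal_nonneg]
    _ = 2 * (c1 * tv q1 q2) + |c1 - c2| := by
        rw [sum_add_distrib, ← mul_sum, ← mul_sum, q2.sum_toReal, tv]
        ring

lemma sum_sum_abs_mul_sub_mul_le {c1 : X → ℝ} (hc1 : ∀ x, 0 ≤ c1 x) (c2 : X → ℝ)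
    (q1 q2 : X → PMF Y) :
    ∑ x, ∑ y, |c1 x * (q1 x y).toReal - c2 x * (q2 x y).toReal| ≤
      2 * (tvFun c1 c2 + ∑ x, c1 x * tv (q1 x) (q2 x)) :=
  (sum_le_sum fun x _ => sum_abs_mul_sub_mul_le_s9 (hc1 x) (c2 x) (q1 x) (q2 x)).trans_eq <| by
    rw [sum_add_distrib, ← mul_sum, tvFun]
    ring

noncomputable def weightsBind (d : X → ℝ) (p : X → PMF Y) : Y → ℝ :=
  fun y => ∑ x, d x * (p x y).toReal

noncomputable def weightsCompProd (m : X → ℝ) (q : X → PMF Y) : X × Y → ℝ :=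
  fun xy => m xy.1 * (q xy.1 xy.2).toReal

lemma weightsBind_mem_stdSimplex {d : X → ℝ} (hd : d ∈ stdSimplex ℝ X) (p : X → PMF Y) :
    weightsBind d p ∈ stdSimplex ℝ Y := by
  refine ⟨fun y => sum_nonneg fun x _ => mul_nonneg (hd.1 x) ENNReal.toReal_nonneg, ?_⟩
  simp only [weightsBind]
  rw [sum_comm]
  simp [← mul_sum, hd.2]

lemma weightsCompProd_mem_stdSimplex {m : X → ℝ} (hm : m ∈ stdSimplex ℝ X) (q : X → PMF Y) :
    weightsCompProd m q ∈ stdSimplex ℝ (X × Y) :=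
  ⟨fun _ => mul_nonneg (hm.1 _) ENNReal.toReal_nonneg, by
    simp [weightsCompProd, Fintype.sum_prod_type, ← mul_sum, hm.2]⟩

lemma tvFun_weightsBind_le {d1 : X → ℝ} (hd1 : ∀ x, 0 ≤ d1 x) (d2 : X → ℝ) (p1 p2 : X → PMF Y) :
    tvFun (weightsBind d1 p1) (weightsBind d2 p2) ≤ tvFun d1 d2 + ∑ x, d1 x * tv (p1 x) (p2 x) := by
  have h := sum_sum_abs_mul_sub_mul_le hd1 d2 p1 p2
  rw [sum_comm] at h
  calc tvFun (weightsBind d1 p1) (weightsBind d2 p2)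
      ≤ 1 / 2 * ∑ y, ∑ x, |d1 x * (p1 x y).toReal - d2 x * (p2 x y).toReal| := by
        unfold tvFun weightsBind
        gcongr with y
        rw [← sum_sub_distrib]
        exact abs_sum_le_sum_abs _ _
    _ ≤ _ := by linarith

lemma tvFun_weightsCompProd_le {m1 : X → ℝ} (hm1 : ∀ x, 0 ≤ m1 x) (m2 : X → ℝ)
    (q1 q2 : X → PMF Y) :
    tvFun (weightsCompProd m1 q1) (weightsCompProd m2 q2) ≤
      tvFun m1 m2 + ∑ x, m1 x * tv (q1 x) (q2 x) := by
  have h := sum_sum_abs_mul_sub_mul_le hm1 m2 q1 q2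
  rw [tvFun, Fintype.sum_prod_type]
  simp only [weightsCompProd]
  linarith

lemma abs_sum_mul_sub_sum_mul_le {r : X → ℝ} {rmax : ℝ} (hr : ∀ x, |r x| ≤ rmax)
    (d1 d2 : X → ℝ) :
    |∑ x, d1 x * r x - ∑ x, d2 x * r x| ≤ 2 * rmax * tvFun d1 d2 := by
  rw [← sum_sub_distrib]
  calc |∑ x, (d1 x * r x - d2 x * r x)| ≤ ∑ x, |d1 x - d2 x| * rmax := by
        refine (abs_sum_le_sum_abs _ _).trans (sum_le_sum fun x _ => ?_)
        rw [← sub_mul, abs_mul]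
        exact mul_le_mul_of_nonneg_left (hr x) (abs_nonneg _)
    _ = 2 * rmax * tvFun d1 d2 := by
        rw [tvFun, ← sum_mul]
        ring

lemma abs_sum_mul_le_of_mem_stdSimplex {r : X → ℝ} {rmax : ℝ} (hr : ∀ x, |r x| ≤ rmax)
    {d : X → ℝ} (hd : d ∈ stdSimplex ℝ X) : |∑ x, d x * r x| ≤ rmax :=
  calc |∑ x, d x * r x| ≤ ∑ x, d x * |r x| := by
        refine (abs_sum_le_sum_abs _ _).trans_eq (sum_congr rfl fun x _ => ?_)
        rw [abs_mul, abs_of_nonneg (hd.1 x)]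
    _ ≤ rmax := sum_mul_le_of_mem_stdSimplex hd hr

end Weights

section Marginal

variable {S A : Type*} [Fintype S] [Fintype A] (ρ0 : PMF S) (πs : ℕ → S → PMF A)
  (ps : ℕ → S × A → PMF S)

lemma marginal_zero_s9 :
    marginal ρ0 πs ps 0 = weightsCompProd (fun s => (ρ0 s).toReal) (πs 0) := rfl

lemma marginal_succ_s9 (t : ℕ) :
    marginal ρ0 πs ps (t + 1) =
      weightsCompProd (weightsBind (marginal ρ0 πs ps t) (ps t)) (πs (t + 1)) := by
  ext sa
  simp only [marginal, weightsCompProd, weightsBind, Fintype.sum_prod_type, sum_mul]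

lemma marginal_mem_stdSimplex (t : ℕ) : marginal ρ0 πs ps t ∈ stdSimplex ℝ (S × A) := by
  induction t with
  | zero => exact weightsCompProd_mem_stdSimplex ρ0.toReal_mem_stdSimplex _
  | succ t ih =>
    rw [marginal_succ_s9]
    exact weightsCompProd_mem_stdSimplex (weightsBind_mem_stdSimplex ih _) _

theorem tvFun_marginal_le (πs' : ℕ → S → PMF A) (ps' : ℕ → S × A → PMF S) (εm επ : ℕ → ℝ)
    (hm : ∀ t, ∑ sa, marginal ρ0 πs ps t sa * tv (ps t sa) (ps' t sa) ≤ εm t)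
    (hπ : ∀ t s, tv (πs t s) (πs' t s) ≤ επ t) (t : ℕ) :
    tvFun (marginal ρ0 πs ps t) (marginal ρ0 πs' ps' t) ≤
      ∑ j ∈ range t, εm j + ∑ j ∈ range (t + 1), επ j := by
  induction t with
  | zero =>
    rw [marginal_zero_s9, marginal_zero_s9]
    refine (tvFun_weightsCompProd_le (fun _ => ENNReal.toReal_nonneg) _ _ _).trans ?_
    simpa [tvFun] using sum_mul_le_of_mem_stdSimplex ρ0.toReal_mem_stdSimplex (hπ 0)
  | succ t ih =>
    have hd := marginal_mem_stdSimplex ρ0 πs ps t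
    have hm' := weightsBind_mem_stdSimplex hd (ps t)
    rw [marginal_succ_s9, marginal_succ_s9, sum_range_succ, sum_range_succ]
    calc _ ≤ tvFun (weightsBind (marginal ρ0 πs ps t) (ps t))
            (weightsBind (marginal ρ0 πs' ps' t) (ps' t)) + επ (t + 1) :=
          (tvFun_weightsCompProd_le hm'.1 _ _ _).trans
            (add_le_add le_rfl (sum_mul_le_of_mem_stdSimplex hm' (hπ (t + 1))))
      _ ≤ tvFun (marginal ρ0 πs ps t) (marginal ρ0 πs' ps' t) + εm t + επ (t + 1) := by
          gcongr
          exact (tvFun_weightsBind_le hd.1 _ _ _).trans (add_le_add le_rfl (hm t))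
      _ ≤ _ := by linarith

end Marginal

section Return

variable {S A : Type*} [Fintype S] [Fintype A] {γ rmax : ℝ} {r : S × A → ℝ}

lemma summable_discounted_reward (hγ0 : 0 ≤ γ) (hγ1 : γ < 1) (hr : ∀ sa, |r sa| ≤ rmax)
    {d : ℕ → S × A → ℝ} (hd : ∀ t, d t ∈ stdSimplex ℝ (S × A)) :
    Summable fun t => γ ^ t * ∑ sa, d t sa * r sa := by
  refine .of_norm_bounded (E := ℝ) ((summable_geometric_of_lt_one hγ0 hγ1).mul_right rmax)
    fun t => ?_
  rw [Real.norm_eq_abs, abs_mul, abs_of_nonneg (pow_nonneg hγ0 t)]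
  exact mul_le_mul_of_nonneg_left (abs_sum_mul_le_of_mem_stdSimplex hr (hd t)) (pow_nonneg hγ0 t)

theorem abs_ret_sub_ret_le (hγ0 : 0 ≤ γ) (hγ1 : γ < 1) (hrmax : 0 ≤ rmax)
    (hr : ∀ sa, |r sa| ≤ rmax) {d1 d2 : ℕ → S × A → ℝ} (hd1 : ∀ t, d1 t ∈ stdSimplex ℝ (S × A))
    (hd2 : ∀ t, d2 t ∈ stdSimplex ℝ (S × A)) {B : ℕ → ℝ} {β : ℝ}
    (hB : ∀ t, tvFun (d1 t) (d2 t) ≤ B t) (hβ : HasSum (fun t => γ ^ t * B t) β) :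
    |ret γ r d1 - ret γ r d2| ≤ 2 * rmax * β := by
  rw [ret, ret, ← (summable_discounted_reward hγ0 hγ1 hr hd1).tsum_sub
    (summable_discounted_reward hγ0 hγ1 hr hd2), ← Real.norm_eq_abs]
  refine tsum_of_norm_bounded (hβ.mul_left (2 * rmax)) fun t => ?_
  rw [Real.norm_eq_abs, ← mul_sub, abs_mul, abs_of_nonneg (pow_nonneg hγ0 t), mul_left_comm]
  refine mul_le_mul_of_nonneg_left ((abs_sum_mul_sub_sum_mul_le hr _ _).trans ?_) (pow_nonneg hγ0 t)
  exact mul_le_mul_of_nonneg_left (hB t) (by positivity)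

end Return

section Discounting

variable {γ : ℝ}

lemma HasSum.of_nat_add_of_eq_zero {f : ℕ → ℝ} {k : ℕ} {a : ℝ}
    (h : HasSum (fun n => f (n + k)) a) (hf : ∀ t < k, f t = 0) : HasSum f a := by
  simpa [sum_eq_zero fun t ht => hf t (mem_range.mp ht)] using (hasSum_nat_add_iff k).mp h

lemma hasSum_tsub_mul_geometric (hγ0 : 0 ≤ γ) (hγ1 : γ < 1) (k : ℕ) :
    HasSum (fun t => ((t - k : ℕ) : ℝ) * γ ^ t) (γ ^ (k + 1) / (1 - γ) ^ 2) := by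
  have h := (hasSum_coe_mul_geometric_of_norm_lt_one
    (by rwa [Real.norm_of_nonneg hγ0] : ‖γ‖ < 1)).mul_left (γ ^ k)
  rw [show γ ^ (k + 1) / (1 - γ) ^ 2 = γ ^ k * (γ / (1 - γ) ^ 2) by ring]
  refine .of_nat_add_of_eq_zero (k := k) (h.congr_fun fun n => ?_) fun t ht => ?_
  · rw [Nat.add_sub_cancel, pow_add]
    ring
  · simp [Nat.sub_eq_zero_of_le ht.le]

lemma hasSum_ite_le_geometric (hγ0 : 0 ≤ γ) (hγ1 : γ < 1) (k : ℕ) :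
    HasSum (fun t => if k ≤ t then γ ^ t else 0) (γ ^ k / (1 - γ)) := by
  refine .of_nat_add_of_eq_zero (k := k) ?_ fun t ht => if_neg (not_le.mpr ht)
  refine ((hasSum_geometric_of_lt_one hγ0 hγ1).mul_left (γ ^ k)).congr_fun fun n => ?_
  rw [if_pos (Nat.le_add_left k n), pow_add, mul_comm]

end Discounting

lemma sum_range_ite_lt (a b : ℝ) (k t : ℕ) :
    ∑ j ∈ range t, (if j < k then a else b) = min t k * a + (t - k : ℕ) * b := by
  induction t with
  | zero => simp
  | succ t ih =>
    rw [sum_range_succ, ih]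
    rcases lt_or_ge t k with h | h
    · rw [if_pos h, min_eq_left h.le, min_eq_left h, Nat.sub_eq_zero_of_le h.le,
        Nat.sub_eq_zero_of_le h]
      push_cast
      ring
    · rw [if_neg h.not_gt, min_eq_right h, min_eq_right (by omega), Nat.succ_sub h]
      push_cast
      ring

lemma sum_range_ite_add_sum_range_ite_le {k : ℕ} {a c : ℝ} (ha : 0 < k → 0 ≤ a) (hc : 0 ≤ c) (b e : ℝ)
    (t : ℕ) :
    ∑ j ∈ range t, (if j < k then a else b) + ∑ j ∈ range (t + 1), (if j < k then c else e) ≤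
      k * (a + c) + c + (t - k : ℕ) * (b + e) + if k ≤ t then e else 0 := by
  rw [sum_range_ite_lt, sum_range_ite_lt]
  rcases le_or_gt k t with h | h
  · rw [min_eq_right h, min_eq_right (by omega), if_pos h, Nat.succ_sub h]
    push_cast
    linarith
  · have htk : (t : ℝ) + 1 ≤ k := by exact_mod_cast h
    have ha' := ha (by omega)
    rw [min_eq_left h.le, min_eq_left h, Nat.sub_eq_zero_of_le h.le, Nat.sub_eq_zero_of_le h,
      if_neg h.not_ge]
    push_cast
    nlinarith

theorem returns_bound_branched_general
    {S A : Type*} [Fintype S] [Fintype A]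
    (k : ℕ)
    (p1pre p2pre p1post p2post : S × A → PMF S)
    (π1pre π2pre π1post π2post : S → PMF A) (ρ0 : PMF S)
    (r : S × A → ℝ) (rmax : ℝ) (hrmax : 0 ≤ rmax) (hr : ∀ sa : S × A, |r sa| ≤ rmax)
    (γ : ℝ) (hγ0 : 0 < γ) (hγ1 : γ < 1) (εmpre επpre εmpost επpost : ℝ)
    (hmpost : ∀ t : ℕ, t < k → ∑ sa : S × A,
      marginal ρ0 (fun t => if t < k then π1post else π1pre)
        (fun t => if t < k then p1post else p1pre) t sa *
          tv (p1post sa) (p2post sa) ≤ εmpost)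
    (hπpost : ∀ s : S, tv (π1post s) (π2post s) ≤ επpost)
    (hmpre : ∀ t : ℕ, k ≤ t → ∑ sa : S × A,
      marginal ρ0 (fun t => if t < k then π1post else π1pre)
        (fun t => if t < k then p1post else p1pre) t sa *
          tv (p1pre sa) (p2pre sa) ≤ εmpre)
    (hπpre : ∀ s : S, tv (π1pre s) (π2pre s) ≤ επpre) :
    |ret γ r (marginal ρ0 (fun t => if t < k then π1post else π1pre)
          (fun t => if t < k then p1post else p1pre)) -
        ret γ r (marginal ρ0 (fun t => if t < k then π2post else π2pre)
          (fun t => if t < k then p2post else p2pre))| ≤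
      2 * rmax * (γ ^ (k + 1) * (εmpre + επpre) / (1 - γ) ^ 2 +
        (k : ℝ) * (εmpost + επpost) / (1 - γ) +
        γ ^ k * επpre / (1 - γ) + επpost / (1 - γ)) := by
  have hδ := tvFun_marginal_le ρ0 (fun t => if t < k then π1post else π1pre)
    (fun t => if t < k then p1post else p1pre) (fun t => if t < k then π2post else π2pre)
    (fun t => if t < k then p2post else p2pre) (fun t => if t < k then εmpost else εmpre)
    (fun t => if t < k then επpost else επpre)
    (fun t => by split_ifs with h; exacts [hmpost t h, hmpre t (not_lt.mp h)])
    (fun t s => by split_ifs; exacts [hπpost s, hπpre s])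
  have hεmpost : 0 < k → 0 ≤ εmpost := fun hk => (sum_nonneg fun sa _ =>
    mul_nonneg ((marginal_mem_stdSimplex _ _ _ 0).1 sa) (tv_nonneg _ _)).trans (hmpost 0 hk)
  obtain ⟨s, -⟩ := ρ0.support_nonempty
  have hεπpost : 0 ≤ επpost := (tv_nonneg _ _).trans (hπpost s)
  have hβ := (((hasSum_geometric_of_lt_one hγ0.le hγ1).mul_left
      (k * (εmpost + επpost) + επpost)).add
    ((hasSum_tsub_mul_geometric hγ0.le hγ1 k).mul_left (εmpre + επpre))).add
    ((hasSum_ite_le_geometric hγ0.le hγ1 k).mul_left επpre)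
  calc _ ≤ 2 * rmax * _ :=
        abs_ret_sub_ret_le hγ0.le hγ1 hrmax hr (marginal_mem_stdSimplex _ _ _)
          (marginal_mem_stdSimplex _ _ _)
          (fun t => (hδ t).trans (sum_range_ite_add_sum_range_ite_le hεmpost hεπpost εmpre επpre t))
          (hβ.congr_fun fun t => by split_ifs <;> ring)
    _ = _ := by
        field_simp
        ring

/-- Returns bound for branched rollouts (Lemma B.4). -/
theorem returns_bound_branched
    {S A : Type*} [Fintype S] [Fintype A] [Nonempty S] [Nonempty A]
    (k : ℕ)
    (p1pre p2pre p1post p2post : S × A → PMF S)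
    (π1pre π2pre π1post π2post : S → PMF A) (ρ0 : PMF S)
    (r : S × A → ℝ) (rmax : ℝ) (hrmax : 0 ≤ rmax) (hr : ∀ sa : S × A, |r sa| ≤ rmax)
    (γ : ℝ) (hγ0 : 0 < γ) (hγ1 : γ < 1) (εmpre επpre εmpost επpost : ℝ)
    (hmpost : ∀ t : ℕ, t < k → ∑ sa : S × A,
      marginal ρ0 (fun t => if t < k then π1post else π1pre)
        (fun t => if t < k then p1post else p1pre) t sa *
          tv (p1post sa) (p2post sa) ≤ εmpost)
    (hπpost : ∀ s : S, tv (π1post s) (π2post s) ≤ επpost)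
    (hmpre : ∀ t : ℕ, k ≤ t → ∑ sa : S × A,
      marginal ρ0 (fun t => if t < k then π1post else π1pre)
        (fun t => if t < k then p1post else p1pre) t sa *
          tv (p1pre sa) (p2pre sa) ≤ εmpre)
    (hπpre : ∀ s : S, tv (π1pre s) (π2pre s) ≤ επpre) :
    |ret γ r (marginal ρ0 (fun t => if t < k then π1post else π1pre)
          (fun t => if t < k then p1post else p1pre)) -
        ret γ r (marginal ρ0 (fun t => if t < k then π2post else π2pre)
          (fun t => if t < k then p2post else p2pre))| ≤
      2 * rmax * (γ ^ (k + 1) * (εmpre + επpre) / (1 - γ) ^ 2 +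
        (k : ℝ) * (εmpost + επpost) / (1 - γ) +
        γ ^ k * επpre / (1 - γ) + επpost / (1 - γ)) :=
  returns_bound_branched_general k p1pre p2pre p1post p2post π1pre π2pre π1post π2post ρ0 r rmax
    hrmax hr γ hγ0 hγ1 εmpre επpre εmpost επpost hmpost hπpost hmpre hπpre
end
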